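/- For every m ≥ 1, L_m ≥ (2 ln 2)^{m−1}, where L_{m+1} := ∫₀¹ η_m(v) dv and η_m is the singular iterated kernel defined by η₀ ≡ 1, η_m(v) = ∫₀¹ η_{m−1}(s)/(v+s) ds. -/

import Mathlib

open Real MeasureTheory

open Set

/-- The singular iterated kernel `η₀ ≡ 1`, `η_{m+1}(v) = ∫₀¹ η_m(s)/(v+s) ds`. -/
noncomputable def etaFn : ℕ → ℝ → ℝ
  | 0 => fun _ => 1
  | m + 1 => fun v => ∫ s in (0 : ℝ)..1, etaFn m s / (v + s)

/-- The singular iterated integral `L_{m+1} := ∫₀¹ η_m(v) dv` (so `L₁ = 1`). -/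
noncomputable def Lseq (m : ℕ) : ℝ := ∫ v in (0 : ℝ)..1, etaFn (m - 1) v

lemma etaFn_succ (m : ℕ) (v : ℝ) :
    etaFn (m + 1) v = ∫ s in Ioc (0:ℝ) 1, etaFn m s / (v + s) := by
  rw [show etaFn (m+1) v = ∫ s in (0:ℝ)..1, etaFn m s / (v + s) from rfl,
    intervalIntegral.integral_of_le zero_le_one]

lemma eta_nonneg : ∀ m, ∀ v : ℝ, 0 ≤ v → 0 ≤ etaFn m v := by
  intro m
  induction m with
  | zero => intro v _; exact zero_le_one
  | succ m ih =>
    intro v hv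
    rw [etaFn_succ]
    apply setIntegral_nonneg measurableSet_Ioc
    intro s hs
    exact div_nonneg (ih s hs.1.le) (by linarith [hs.1])

lemma eta_measurable : ∀ m, Measurable (etaFn m) := by
  intro m
  induction m with
  | zero => exact measurable_const
  | succ m ih =>
    have h : etaFn (m+1) = fun v => ∫ s in Ioc (0:ℝ) 1, etaFn m s / (v + s) :=
      funext (etaFn_succ m)
    rw [h]
    have hF : StronglyMeasurable (fun p : ℝ × ℝ => etaFn m p.2 / (p.1 + p.2)) :=
      ((ih.comp measurable_snd).div (measurable_fst.add measurable_snd)).stronglyMeasurable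
    exact (hF.integral_prod_right').measurable

lemma rpow_integrableOn (r : ℝ) (hr : -1 < r) (a b : ℝ) (hab : a ≤ b) :
    IntegrableOn (fun s : ℝ => s ^ r) (Ioc a b) := by
  have := intervalIntegral.intervalIntegrable_rpow' (a := a) (b := b) hr
  rwa [intervalIntegrable_iff_integrableOn_Ioc_of_le hab] at this

lemma rpow_div_contOn (v c : ℝ) (hv : 0 < v) :
    ContinuousOn (fun s : ℝ => s ^ c / (v + s)) (Ioc (0:ℝ) 1) := by
  apply ContinuousOn.div
  · exact continuousOn_id.rpow_const fun x hx => Or.inl (ne_of_gt hx.1)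
  · exact (continuous_const.add continuous_id).continuousOn
  · intro x hx; have := hx.1; positivity

lemma sqker_integrableOn (v : ℝ) (hv : 0 < v) :
    IntegrableOn (fun s : ℝ => s ^ (-(1/2) : ℝ) / (v + s)) (Ioc (0:ℝ) 1) := by
  refine Integrable.mono' (g := fun s => v⁻¹ * s ^ (-(1/2) : ℝ))
    (((intervalIntegral.intervalIntegrable_rpow' (a:=0) (b:=1) (by norm_num)).1).const_mul _)
    ((rpow_div_contOn v _ hv).aestronglyMeasurable measurableSet_Ioc) ?_
  filter_upwards [ae_restrict_mem measurableSet_Ioc] with s hs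
  have h1 : 0 < v + s := by linarith [hs.1]
  rw [Real.norm_eq_abs, abs_of_nonneg (div_nonneg (rpow_nonneg hs.1.le _) h1.le),
    mul_comm, ← div_eq_mul_inv]
  gcongr
  · exact rpow_nonneg hs.1.le _
  · linarith [hs.1]

lemma sqker_bound (v : ℝ) (hv : v ∈ Ioc (0:ℝ) 1) :
    ∫ s in Ioc (0:ℝ) 1, s ^ (-(1/2) : ℝ) / (v + s) ≤ 4 * v ^ (-(1/2) : ℝ) := by
  have hv0 := hv.1
  have hsplit : Ioc (0:ℝ) 1 = Ioc 0 v ∪ Ioc v 1 := (Ioc_union_Ioc_eq_Ioc hv.1.le hv.2).symm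
  have hint := sqker_integrableOn v hv0
  have hint1 : IntegrableOn (fun s : ℝ => s ^ (-(1/2) : ℝ) / (v + s)) (Ioc 0 v) :=
    hint.mono_set (by rw [hsplit]; exact subset_union_left)
  have hint2 : IntegrableOn (fun s : ℝ => s ^ (-(1/2) : ℝ) / (v + s)) (Ioc v 1) :=
    hint.mono_set (by rw [hsplit]; exact subset_union_right)
  rw [hsplit, setIntegral_union (Ioc_disjoint_Ioc_of_le le_rfl) measurableSet_Ioc hint1 hint2]
  have hA : ∫ s in Ioc (0:ℝ) v, s ^ (-(1/2) : ℝ) / (v + s) ≤ 2 * v ^ (-(1/2) : ℝ) := by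
    have hig : IntegrableOn (fun s : ℝ => v⁻¹ * s ^ (-(1/2) : ℝ)) (Ioc 0 v) := by
      have := (intervalIntegral.intervalIntegrable_rpow'
        (a:=0) (b:=v) (r := -(1/2)) (by norm_num)).1
      exact this.const_mul _
    have hle : ∫ s in Ioc (0:ℝ) v, s ^ (-(1/2) : ℝ) / (v + s)
        ≤ ∫ s in Ioc (0:ℝ) v, v⁻¹ * s ^ (-(1/2) : ℝ) := by
      refine setIntegral_mono_on hint1 hig measurableSet_Ioc ?_
      intro s hs
      rw [mul_comm, ← div_eq_mul_inv]
      gcongr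
      · exact rpow_nonneg hs.1.le _
      · linarith [hs.1]
    refine hle.trans ?_
    rw [integral_const_mul, ← intervalIntegral.integral_of_le hv0.le,
      integral_rpow (Or.inl (by norm_num)),
      show (-(1/2) : ℝ) + 1 = 1/2 by norm_num,
      Real.zero_rpow (by norm_num : (1/2 : ℝ) ≠ 0), sub_zero,
      show v ^ (1/2 : ℝ) / (1/2) = 2 * v ^ (1/2 : ℝ) by ring]
    have key : v⁻¹ * v ^ (1/2 : ℝ) = v ^ (-(1/2) : ℝ) := by
      rw [← Real.rpow_neg_one, ← Real.rpow_add hv0]; norm_num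
    rw [show v⁻¹ * (2 * v ^ (1/2 : ℝ)) = 2 * (v⁻¹ * v ^ (1/2 : ℝ)) by ring, key]
  have hB : ∫ s in Ioc v 1, s ^ (-(1/2) : ℝ) / (v + s) ≤ 2 * v ^ (-(1/2) : ℝ) := by
    have hig : IntegrableOn (fun s : ℝ => s ^ (-(3/2) : ℝ)) (Ioc v 1) := by
      have := intervalIntegral.intervalIntegrable_rpow (μ := volume)
        (a := v) (b := 1) (r := -(3/2))
        (Or.inr (notMem_uIcc_of_lt hv0 zero_lt_one))
      rwa [intervalIntegrable_iff_integrableOn_Ioc_of_le hv.2] at this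
    have hle : ∫ s in Ioc v 1, s ^ (-(1/2) : ℝ) / (v + s)
        ≤ ∫ s in Ioc v 1, s ^ (-(3/2) : ℝ) := by
      refine setIntegral_mono_on hint2 hig measurableSet_Ioc ?_
      intro s hs
      have hs0 : 0 < s := lt_trans hv0 hs.1
      have h1 : s ^ (-(1/2) : ℝ) / (v + s) ≤ s ^ (-(1/2) : ℝ) / s := by
        gcongr
        linarith
      refine h1.trans_eq ?_
      rw [div_eq_mul_inv, ← Real.rpow_neg_one s, ← Real.rpow_add hs0]; norm_num
    refine hle.trans ?_
    rw [← intervalIntegral.integral_of_le hv.2,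
      integral_rpow (Or.inr ⟨by norm_num, notMem_uIcc_of_lt hv0 zero_lt_one⟩),
      show (-(3/2) : ℝ) + 1 = -(1/2) by norm_num, Real.one_rpow]
    have h2 : (1 - v ^ (-(1/2) : ℝ)) / (-(1/2)) = 2 * v ^ (-(1/2) : ℝ) - 2 := by ring
    rw [h2]; linarith
  linarith

lemma eta_le : ∀ m, ∀ v ∈ Ioc (0:ℝ) 1, etaFn m v ≤ 4 ^ m * v ^ (-(1/2) : ℝ) := by
  intro m
  induction m with
  | zero =>
    intro v hv
    rw [pow_zero, one_mul]
    show (1:ℝ) ≤ _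
    exact Real.one_le_rpow_of_pos_of_le_one_of_nonpos hv.1 hv.2 (by norm_num)
  | succ m ih =>
    intro v hv
    rw [etaFn_succ]
    have hker : IntegrableOn (fun s => etaFn m s / (v + s)) (Ioc (0:ℝ) 1) := by
      refine Integrable.mono' (g := fun s => (4:ℝ) ^ m * (s ^ (-(1/2) : ℝ) / (v + s)))
        ((sqker_integrableOn v hv.1).const_mul _)
        (((eta_measurable m).div
          (measurable_const.add measurable_id)).aestronglyMeasurable) ?_
      filter_upwards [ae_restrict_mem measurableSet_Ioc] with s hs
      have h1 : 0 < v + s := by linarith [hv.1, hs.1]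
      rw [Real.norm_eq_abs,
        abs_of_nonneg (div_nonneg (eta_nonneg m s hs.1.le) h1.le), mul_div_assoc']
      gcongr
      exact ih s hs
    have hle : ∫ s in Ioc (0:ℝ) 1, etaFn m s / (v + s)
        ≤ ∫ s in Ioc (0:ℝ) 1, (4:ℝ) ^ m * (s ^ (-(1/2) : ℝ) / (v + s)) := by
      refine setIntegral_mono_on hker ((sqker_integrableOn v hv.1).const_mul _)
        measurableSet_Ioc ?_
      intro s hs
      have h1 : 0 < v + s := by linarith [hv.1, hs.1]
      rw [mul_div_assoc']
      gcongr
      exact ih s hs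
    refine hle.trans ?_
    rw [integral_const_mul]
    calc (4:ℝ) ^ m * ∫ s in Ioc (0:ℝ) 1, s ^ (-(1/2) : ℝ) / (v + s)
        ≤ (4:ℝ) ^ m * (4 * v ^ (-(1/2) : ℝ)) := by
          have h4 : (0:ℝ) ≤ 4 ^ m := by positivity
          exact mul_le_mul_of_nonneg_left (sqker_bound v hv) h4
      _ = 4 ^ (m+1) * v ^ (-(1/2) : ℝ) := by ring

lemma eta_integrableOn (m : ℕ) : IntegrableOn (etaFn m) (Ioc (0:ℝ) 1) := by
  refine Integrable.mono' (g := fun v => (4:ℝ) ^ m * v ^ (-(1/2) : ℝ))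
    (((intervalIntegral.intervalIntegrable_rpow' (a:=0) (b:=1) (by norm_num)).1).const_mul _)
    (eta_measurable m).aestronglyMeasurable ?_
  filter_upwards [ae_restrict_mem measurableSet_Ioc] with v hv
  rw [Real.norm_eq_abs, abs_of_nonneg (eta_nonneg m v hv.1.le)]
  exact eta_le m v hv

lemma kernel_integrableOn (m : ℕ) {v : ℝ} (hv : 0 < v) :
    IntegrableOn (fun s => etaFn m s / (v + s)) (Ioc (0:ℝ) 1) := by
  refine Integrable.mono' (g := fun s => v⁻¹ * etaFn m s)
    ((eta_integrableOn m).const_mul _)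
    (((eta_measurable m).div
      (measurable_const.add measurable_id)).aestronglyMeasurable) ?_
  filter_upwards [ae_restrict_mem measurableSet_Ioc] with s hs
  have h1 : 0 < v + s := by linarith [hs.1]
  rw [Real.norm_eq_abs, abs_of_nonneg (div_nonneg (eta_nonneg m s hs.1.le) h1.le),
    mul_comm, ← div_eq_mul_inv]
  gcongr
  · exact eta_nonneg m s hs.1.le
  · linarith [hs.1]

lemma eta_antitoneOn (m : ℕ) : AntitoneOn (etaFn m) (Ioc (0:ℝ) 1) := by
  cases m with
  | zero => intro a _ b _ _; exact le_refl 1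
  | succ m =>
    intro a ha b hb hab
    rw [etaFn_succ, etaFn_succ]
    refine setIntegral_mono_on (kernel_integrableOn m hb.1) (kernel_integrableOn m ha.1)
      measurableSet_Ioc ?_
    intro s hs
    gcongr
    · exact eta_nonneg m s hs.1.le
    · linarith [hs.1, ha.1]

lemma log_integrableOn : IntegrableOn Real.log (Ioc (0:ℝ) 1) := by
  refine Integrable.mono' (g := fun s => 4 * s ^ (-(1/4) : ℝ))
    (((intervalIntegral.intervalIntegrable_rpow' (a:=0) (b:=1) (by norm_num)).1).const_mul _)
    (Real.measurable_log.aestronglyMeasurable) ?_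
  filter_upwards [ae_restrict_mem measurableSet_Ioc] with s hs
  have hs0 := hs.1
  rw [Real.norm_eq_abs, abs_of_nonpos (Real.log_nonpos hs0.le hs.2)]
  have h1 : -Real.log s = 4 * Real.log (s ^ (-(1/4) : ℝ)) := by
    rw [Real.log_rpow hs0]; ring
  rw [h1]
  have h2 : Real.log (s ^ (-(1/4) : ℝ)) ≤ s ^ (-(1/4) : ℝ) - 1 :=
    Real.log_le_sub_one_of_pos (rpow_pos_of_pos hs0 _)
  nlinarith [rpow_pos_of_pos hs0 (-(1/4) : ℝ)]

lemma log_int_eq : ∫ s in Ioc (0:ℝ) 1, Real.log s = -1 := by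
  rw [← intervalIntegral.integral_of_le zero_le_one]
  have key : ∫ s in (0:ℝ)..1, Real.log s = (fun x : ℝ => x * Real.log x - x) 1
      - (fun x : ℝ => x * Real.log x - x) 0 := by
    refine intervalIntegral.integral_eq_sub_of_hasDeriv_right_of_le zero_le_one
      ((Real.continuous_mul_log.sub continuous_id).continuousOn) ?_ ?_
    · intro x hx
      have h := (Real.hasDerivAt_mul_log hx.1.ne').sub (hasDerivAt_id x)
      simpa using h.hasDerivWithinAt
    · rw [intervalIntegrable_iff_integrableOn_Ioc_of_le zero_le_one]
      exact log_integrableOn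
  rw [key]; simp

lemma log1p_int_eq : ∫ s in Ioc (0:ℝ) 1, Real.log (1 + s) = 2 * Real.log 2 - 1 := by
  rw [← intervalIntegral.integral_of_le zero_le_one,
    intervalIntegral.integral_comp_add_left Real.log 1]
  norm_num
  ring

lemma log1p_integrableOn : IntegrableOn (fun s => Real.log (1 + s)) (Ioc (0:ℝ) 1) := by
  have : ContinuousOn (fun s : ℝ => Real.log (1 + s)) (Icc 0 1) := by
    refine ContinuousOn.log ((continuous_const.add continuous_id).continuousOn) ?_
    intro x hx; nlinarith [hx.1]
  exact (this.integrableOn_Icc).mono_set Ioc_subset_Icc_self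

lemma g_int_eq : ∫ s in Ioc (0:ℝ) 1, (Real.log (1 + s) - Real.log s) = 2 * Real.log 2 := by
  rw [integral_sub log1p_integrableOn log_integrableOn, log_int_eq, log1p_int_eq]
  ring

lemma inner_int (s : ℝ) (hs : 0 < s) :
    ∫ v in Ioc (0:ℝ) 1, (v + s)⁻¹ = Real.log (1 + s) - Real.log s := by
  rw [← intervalIntegral.integral_of_le zero_le_one,
    intervalIntegral.integral_comp_add_right (fun x : ℝ => x⁻¹) s,
    integral_inv (by rw [uIcc_of_le (by linarith)]; intro h; exact absurd h.1 (by linarith))]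
  rw [zero_add, Real.log_div (by linarith) hs.ne', add_comm]

lemma chebyshev {f g : ℝ → ℝ}
    (hf : IntegrableOn f (Ioc (0:ℝ) 1)) (hg : IntegrableOn g (Ioc (0:ℝ) 1))
    (hfg : IntegrableOn (fun v => f v * g v) (Ioc (0:ℝ) 1))
    (hmono : ∀ v ∈ Ioc (0:ℝ) 1, ∀ s ∈ Ioc (0:ℝ) 1, 0 ≤ (f v - f s) * (g v - g s)) :
    (∫ v in Ioc (0:ℝ) 1, f v) * (∫ v in Ioc (0:ℝ) 1, g v)
      ≤ ∫ v in Ioc (0:ℝ) 1, f v * g v := by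
  set μ := volume.restrict (Ioc (0:ℝ) 1) with hμ
  haveI : IsProbabilityMeasure μ := ⟨by simp [hμ, Real.volume_Ioc]⟩
  have h1 : Integrable (fun z : ℝ × ℝ => f z.1 * g z.1) (μ.prod μ) := by
    have := hfg.mul_prod (integrable_const (1:ℝ) (μ := μ))
    simpa using this
  have h2 : Integrable (fun z : ℝ × ℝ => f z.1 * g z.2) (μ.prod μ) := hf.mul_prod hg
  have h3 : Integrable (fun z : ℝ × ℝ => f z.2 * g z.1) (μ.prod μ) := by
    have := hg.mul_prod hf
    simpa [mul_comm] using this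
  have h4 : Integrable (fun z : ℝ × ℝ => f z.2 * g z.2) (μ.prod μ) := by
    have := (integrable_const (1:ℝ) (μ := μ)).mul_prod hfg
    simpa using this
  have hnn : 0 ≤ ∫ z : ℝ × ℝ, (f z.1 * g z.1 - f z.1 * g z.2 - f z.2 * g z.1
      + f z.2 * g z.2) ∂(μ.prod μ) := by
    have hrw : μ.prod μ = (volume.prod volume).restrict ((Ioc (0:ℝ) 1) ×ˢ (Ioc (0:ℝ) 1)) := by
      rw [hμ, Measure.prod_restrict]
    refine integral_nonneg_of_ae ?_
    rw [hrw]
    filter_upwards [ae_restrict_mem (measurableSet_Ioc.prod measurableSet_Ioc)] with z hz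
    have h := hmono z.1 hz.1 z.2 hz.2
    show (0:ℝ) ≤ _
    nlinarith [h]
  have h12 : Integrable (fun z : ℝ × ℝ => f z.1 * g z.1 - f z.1 * g z.2) (μ.prod μ) :=
    h1.sub h2
  have h123 : Integrable
      (fun z : ℝ × ℝ => f z.1 * g z.1 - f z.1 * g z.2 - f z.2 * g z.1) (μ.prod μ) :=
    h12.sub h3
  rw [integral_add h123 h4, integral_sub h12 h3, integral_sub h1 h2] at hnn
  have e1 : ∫ z : ℝ × ℝ, f z.1 * g z.1 ∂(μ.prod μ) = ∫ v, f v * g v ∂μ := by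
    have := integral_prod_mul (μ := μ) (ν := μ) (fun v => f v * g v) (fun _ : ℝ => (1:ℝ))
    simpa using this
  have e4 : ∫ z : ℝ × ℝ, f z.2 * g z.2 ∂(μ.prod μ) = ∫ v, f v * g v ∂μ := by
    have := integral_prod_mul (μ := μ) (ν := μ) (fun _ : ℝ => (1:ℝ)) (fun v => f v * g v)
    simpa using this
  have e2 : ∫ z : ℝ × ℝ, f z.1 * g z.2 ∂(μ.prod μ) = (∫ v, f v ∂μ) * ∫ v, g v ∂μ :=
    integral_prod_mul f g
  have e3 : ∫ z : ℝ × ℝ, f z.2 * g z.1 ∂(μ.prod μ) = (∫ v, g v ∂μ) * ∫ v, f v ∂μ := by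
    have := integral_prod_mul (μ := μ) (ν := μ) g f
    rw [← this]
    congr 1
    funext z
    ring
  rw [e1, e2, e3, e4] at hnn
  linarith

lemma L_succ_eq (m : ℕ) :
    ∫ v in Ioc (0:ℝ) 1, etaFn (m+1) v
      = ∫ s in Ioc (0:ℝ) 1, etaFn m s * (Real.log (1+s) - Real.log s) := by
  set μ := volume.restrict (Ioc (0:ℝ) 1) with hμ
  have hmeas : AEStronglyMeasurable
      (Function.uncurry fun v s : ℝ => etaFn m s / (v + s)) (μ.prod μ) :=
    (((eta_measurable m).comp measurable_snd).div
      (measurable_fst.add measurable_snd)).aestronglyMeasurable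
  have hInt : Integrable (Function.uncurry fun v s : ℝ => etaFn m s / (v + s)) (μ.prod μ) := by
    rw [integrable_prod_iff hmeas]
    constructor
    · filter_upwards [ae_restrict_mem measurableSet_Ioc] with v hv
      exact kernel_integrableOn m hv.1
    · refine Integrable.congr (eta_integrableOn (m+1)) ?_
      filter_upwards [ae_restrict_mem measurableSet_Ioc] with v hv
      rw [etaFn_succ]
      refine integral_congr_ae ?_
      filter_upwards [ae_restrict_mem measurableSet_Ioc] with s hs
      have h1 : 0 < v + s := by linarith [hv.1, hs.1]
      show etaFn m s / (v + s) = ‖etaFn m s / (v + s)‖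
      rw [Real.norm_eq_abs, abs_of_nonneg (div_nonneg (eta_nonneg m s hs.1.le) h1.le)]
  have hswap := integral_integral_swap hInt
  calc ∫ v in Ioc (0:ℝ) 1, etaFn (m+1) v
      = ∫ v, ∫ s, etaFn m s / (v + s) ∂μ ∂μ := by
        refine integral_congr_ae (Filter.Eventually.of_forall fun v => ?_)
        exact etaFn_succ m v
    _ = ∫ s, ∫ v, etaFn m s / (v + s) ∂μ ∂μ := hswap
    _ = ∫ s in Ioc (0:ℝ) 1, etaFn m s * (Real.log (1+s) - Real.log s) := by
        refine integral_congr_ae ?_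
        filter_upwards [ae_restrict_mem measurableSet_Ioc] with s hs
        have : ∫ v, etaFn m s / (v + s) ∂μ = etaFn m s * ∫ v, (v + s)⁻¹ ∂μ := by
          rw [← integral_const_mul]
          refine integral_congr_ae (Filter.Eventually.of_forall fun v => ?_)
          show etaFn m s / (v + s) = etaFn m s * (v + s)⁻¹
          rw [div_eq_mul_inv]
        rw [this, inner_int s hs.1]

lemma neg_log_le (v : ℝ) (hv : v ∈ Ioc (0:ℝ) 1) : -Real.log v ≤ 4 * v ^ (-(1/4) : ℝ) := by
  have h1 : -Real.log v = 4 * Real.log (v ^ (-(1/4) : ℝ)) := by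
    rw [Real.log_rpow hv.1]; ring
  rw [h1]
  have h2 : Real.log (v ^ (-(1/4) : ℝ)) ≤ v ^ (-(1/4) : ℝ) - 1 :=
    Real.log_le_sub_one_of_pos (rpow_pos_of_pos hv.1 _)
  nlinarith [rpow_pos_of_pos hv.1 (-(1/4) : ℝ)]

lemma g_nonneg (s : ℝ) (hs : s ∈ Ioc (0:ℝ) 1) : 0 ≤ Real.log (1+s) - Real.log s := by
  have : Real.log s ≤ Real.log (1+s) := by
    gcongr
    · exact hs.1
    · linarith
  linarith

lemma g_le (v : ℝ) (hv : v ∈ Ioc (0:ℝ) 1) :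
    Real.log (1+v) - Real.log v ≤ 1 + 4 * v ^ (-(1/4) : ℝ) := by
  have h1 : Real.log (1+v) ≤ Real.log 2 := by
    gcongr
    · linarith [hv.1]
    · linarith [hv.2]
  have h2 : Real.log 2 ≤ 1 := by
    have := Real.log_le_sub_one_of_pos (by norm_num : (0:ℝ) < 2)
    linarith
  have h3 := neg_log_le v hv
  linarith

lemma g_antitone : ∀ a ∈ Ioc (0:ℝ) 1, ∀ b ∈ Ioc (0:ℝ) 1, a ≤ b →
    Real.log (1+b) - Real.log b ≤ Real.log (1+a) - Real.log a := by
  intro a ha b hb hab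
  have ha0 := ha.1
  have hb0 := hb.1
  have h1 : Real.log ((1+b)*a) ≤ Real.log ((1+a)*b) := by
    have hpos : 0 < (1+b)*a := by nlinarith
    have hle : (1+b)*a ≤ (1+a)*b := by nlinarith
    exact Real.log_le_log hpos hle
  rw [Real.log_mul (by nlinarith) ha0.ne', Real.log_mul (by nlinarith) hb0.ne'] at h1
  linarith

lemma g_integrableOn :
    IntegrableOn (fun s => Real.log (1+s) - Real.log s) (Ioc (0:ℝ) 1) :=
  log1p_integrableOn.sub log_integrableOn

lemma fg_integrableOn (k : ℕ) :
    IntegrableOn (fun v => etaFn k v * (Real.log (1+v) - Real.log v)) (Ioc (0:ℝ) 1) := by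
  refine Integrable.mono'
    (g := fun v => (4:ℝ) ^ k * v ^ (-(1/2) : ℝ) + (4:ℝ) ^ (k+1) * v ^ (-(3/4) : ℝ))
    ((((intervalIntegral.intervalIntegrable_rpow' (a:=0) (b:=1) (by norm_num)).1).const_mul
        _).add
      (((intervalIntegral.intervalIntegrable_rpow' (a:=0) (b:=1) (by norm_num)).1).const_mul _))
    (((eta_measurable k).mul
      (((measurable_const.add measurable_id).log).sub Real.measurable_log)).aestronglyMeasurable)
    ?_
  filter_upwards [ae_restrict_mem measurableSet_Ioc] with v hv
  have hgn := g_nonneg v hv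
  have hen := eta_nonneg k v hv.1.le
  rw [Real.norm_eq_abs, abs_of_nonneg (mul_nonneg hen hgn)]
  have hprod : v ^ (-(1/2):ℝ) * v ^ (-(1/4):ℝ) = v ^ (-(3/4):ℝ) := by
    rw [← Real.rpow_add hv.1]; norm_num
  have hexp : (4:ℝ) ^ k * v ^ (-(1/2):ℝ) * (1 + 4 * v ^ (-(1/4):ℝ))
      = (4:ℝ) ^ k * v ^ (-(1/2):ℝ) + (4:ℝ) ^ (k+1) * v ^ (-(3/4):ℝ) := by
    rw [← hprod]; ring
  have hm : etaFn k v * (Real.log (1+v) - Real.log v)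
      ≤ (4:ℝ) ^ k * v ^ (-(1/2):ℝ) * (1 + 4 * v ^ (-(1/4):ℝ)) := by
    refine mul_le_mul (eta_le k v hv) (g_le v hv) hgn ?_
    exact mul_nonneg (by positivity) (rpow_nonneg hv.1.le _)
  linarith [hm, hexp.ge, hexp.le]

lemma key_bound : ∀ k : ℕ, (2 * Real.log 2) ^ k ≤ ∫ v in Ioc (0:ℝ) 1, etaFn k v := by
  intro k
  induction k with
  | zero =>
    rw [pow_zero, show etaFn 0 = fun _ : ℝ => (1:ℝ) from rfl]
    simp [Real.volume_Ioc]
  | succ k ih =>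
    rw [L_succ_eq k]
    have hmono : ∀ v ∈ Ioc (0:ℝ) 1, ∀ s ∈ Ioc (0:ℝ) 1,
        0 ≤ (etaFn k v - etaFn k s) *
          ((Real.log (1+v) - Real.log v) - (Real.log (1+s) - Real.log s)) := by
      intro v hv s hs
      rcases le_total v s with h | h
      · exact mul_nonneg
          (sub_nonneg.2 (eta_antitoneOn k hv hs h))
          (sub_nonneg.2 (g_antitone v hv s hs h))
      · have h1 := sub_nonpos.2 (eta_antitoneOn k hs hv h)
        have h2 := sub_nonpos.2 (g_antitone s hs v hv h)
        nlinarith [h1, h2]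
    have cheb := chebyshev (eta_integrableOn k) g_integrableOn (fg_integrableOn k) hmono
    have hlog : (0:ℝ) ≤ 2 * Real.log 2 := by
      have := Real.log_nonneg (by norm_num : (1:ℝ) ≤ 2); linarith
    calc (2 * Real.log 2) ^ (k+1) = (2 * Real.log 2) ^ k * (2 * Real.log 2) := pow_succ _ _
      _ ≤ (∫ v in Ioc (0:ℝ) 1, etaFn k v) * (2 * Real.log 2) :=
          mul_le_mul_of_nonneg_right ih hlog
      _ = (∫ v in Ioc (0:ℝ) 1, etaFn k v)
          * ∫ s in Ioc (0:ℝ) 1, (Real.log (1+s) - Real.log s) := by rw [g_int_eq]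
      _ ≤ _ := cheb

/-- `L_m ≥ (2 ln 2)^{m-1}` for every `m ≥ 1`. -/
theorem Lseq_lower_bound (m : ℕ) (hm : 1 ≤ m) :
    (2 * Real.log 2) ^ (m - 1) ≤ Lseq m := by
  obtain ⟨k, rfl⟩ := Nat.exists_eq_add_of_le hm
  rw [Lseq, show 1 + k - 1 = k from by omega,
    intervalIntegral.integral_of_le zero_le_one]
  exact key_bound k
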